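/- arXiv:2008.02173 — 4 statements merged into one kernel-verified Lean document; each statement's English description precedes it below -/
import Mathlib

section
/- In any B₀-VPG representation v ↦ I_v of a finite simple graph G, if four vertices a, b, c, d form an induced C₄ in G, then no two of the segments I_a, I_b, I_c, I_d are collinear. -/
/-- A closed axis-parallel line segment in the plane, designated horizontal or
vertical; degenerate one-point segments are allowed. -/
structure Seg where
  horiz : Bool
  coord : ℝ
  lo : ℝ
  hi : ℝ
  lo_le_hi : lo ≤ hi

/-- The set of points of an axis-parallel segment. -/
def Seg.set (s : Seg) : Set (ℝ × ℝ) :=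
  if s.horiz then {p : ℝ × ℝ | p.2 = s.coord ∧ p.1 ∈ Set.Icc s.lo s.hi}
  else {p : ℝ × ℝ | p.1 = s.coord ∧ p.2 ∈ Set.Icc s.lo s.hi}

/-- `I` is a B₀-VPG representation of `G`: two distinct vertices are adjacent
iff their segments intersect. -/
def IsB0Rep {V : Type*} (G : SimpleGraph V) (I : V → Seg) : Prop :=
  ∀ u v : V, u ≠ v → (G.Adj u v ↔ ((I u).set ∩ (I v).set).Nonempty)

/-- `G` is a B₀-VPG graph. -/
def IsB0VPG {V : Type*} (G : SimpleGraph V) : Prop :=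
  ∃ I : V → Seg, IsB0Rep G I

/-- `G` is a cocomparability graph. -/
def IsCocomparability {V : Type*} (G : SimpleGraph V) : Prop :=
  ∃ P : PartialOrder V, ∀ u v : V, u ≠ v →
    (G.Adj u v ↔ ¬ (P.le u v ∨ P.le v u))

/-- `G` is a comparability graph. -/
def IsComparability {V : Type*} (G : SimpleGraph V) : Prop :=
  ∃ P : PartialOrder V, ∀ u v : V, u ≠ v →
    (G.Adj u v ↔ (P.le u v ∨ P.le v u))

/-- `a, b, c, d` form an induced 4-cycle in `G`. -/
def IsInducedC4 {V : Type*} (G : SimpleGraph V) (a b c d : V) : Prop :=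
  a ≠ b ∧ a ≠ c ∧ a ≠ d ∧ b ≠ c ∧ b ≠ d ∧ c ≠ d ∧
  G.Adj a b ∧ G.Adj b c ∧ G.Adj c d ∧ G.Adj d a ∧ ¬ G.Adj a c ∧ ¬ G.Adj b d

/-- `xy` is a diamond diagonal of `G`. -/
def IsDiamondDiagonal {V : Type*} (G : SimpleGraph V) (x y : V) : Prop :=
  G.Adj x y ∧ ∃ u w : V, u ≠ w ∧ u ≠ x ∧ u ≠ y ∧ w ≠ x ∧ w ≠ y ∧
    ¬ G.Adj u w ∧ G.Adj u x ∧ G.Adj u y ∧ G.Adj w x ∧ G.Adj w y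

/-- `x` and `y` are diamond related in `G`: they are joined by a sequence of
diamond diagonals. -/
def DiamondRelated {V : Type*} (G : SimpleGraph V) : V → V → Prop :=
  Relation.ReflTransGen (IsDiamondDiagonal G)

/-- No two distinct vertices of an induced `C₄` of `G` are diamond related. -/
def NoC4DiamondRelated {V : Type*} (G : SimpleGraph V) : Prop :=
  ∀ a b c d : V, IsInducedC4 G a b c d →
    ∀ x ∈ ({a, b, c, d} : Set V), ∀ y ∈ ({a, b, c, d} : Set V),
      x ≠ y → ¬ DiamondRelated G x y

/-- The complement of the 6-cycle. -/
def C6bar : SimpleGraph (Fin 6) where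
  Adj i j := i ≠ j ∧ j - i ≠ 1 ∧ i - j ≠ 1
  symm := by
    constructor
    intro i j h
    exact ⟨h.1.symm, h.2.2, h.2.1⟩
  loopless := by
    constructor
    intro i h
    exact h.1 rfl

/-- `G` contains no induced copy of the complement of `C₆`. -/
def C6barFree {V : Type*} (G : SimpleGraph V) : Prop :=
  ¬ ∃ f : Fin 6 → V, Function.Injective f ∧
      ∀ i j : Fin 6, C6bar.Adj i j ↔ G.Adj (f i) (f j)

/-- `σ` is an umbrella-free (cocomparability) ordering of `G`. -/
def UmbrellaFree {V : Type*} (G : SimpleGraph V) (σ : LinearOrder V) : Prop :=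
  ∀ x y z : V, σ.lt x y → σ.lt y z → G.Adj x z → (G.Adj x y ∨ G.Adj y z)

/-!
Along a line, convex sets are intervals, and four intervals cannot form an induced `C₄`: if `A`
and `C` are disjoint intervals each meeting both `B` and `D`, then `B ∩ D` is nonempty. So it
suffices to find a line through witnesses `r ∈ A ∩ B`, `q ∈ B ∩ C`, `z ∈ C ∩ D`, `p ∈ D ∩ A`.
If `A ∪ C` is collinear, its line contains all four. If `A ∪ B` is collinear, its line contains
`r`, `q`, `p`, and it is axis-parallel because `r ≠ p` lie on the axis-parallel segment `A`.
As `z` shares a coordinate with `q` (through `C`) and with `p` (through `D`), it lies on that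
line unless `p = q`, which would put `p` in `A ∩ C`.
-/

namespace Set.OrdConnected

variable {α : Type*} [LinearOrder α] {A B C D : Set α}

theorem lt_of_disjoint (hA : A.OrdConnected) (hAC : Disjoint A C) {x x' y : α}
    (hx : x ∈ A) (hx' : x' ∈ A) (hy : y ∈ C) (hxy : x ≤ y) : x' < y := by
  by_contra! h
  exact hAC.notMem_of_mem_right hy (hA.out hx hx' ⟨hxy, h⟩)

theorem lt_of_disjoint' (hC : C.OrdConnected) (hAC : Disjoint A C) {x y y' : α}
    (hx : x ∈ A) (hy : y ∈ C) (hy' : y' ∈ C) (hxy : x ≤ y) : x < y' :=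
  hC.dual.lt_of_disjoint (α := αᵒᵈ) hAC.symm hy hy' hx hxy

theorem inter_nonempty_of_disjoint (hA : A.OrdConnected) (hB : B.OrdConnected)
    (hC : C.OrdConnected) (hD : D.OrdConnected) (hAC : Disjoint A C) {r q z p : α}
    (hr : r ∈ A ∩ B) (hq : q ∈ B ∩ C) (hz : z ∈ C ∩ D) (hp : p ∈ D ∩ A) :
    (B ∩ D).Nonempty := by
  wlog hrq : r ≤ q generalizing A C r q z p
  · exact this hC hA hAC.symm ⟨hq.2, hq.1⟩ ⟨hr.2, hr.1⟩ ⟨hp.2, hp.1⟩ ⟨hz.2, hz.1⟩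
      (not_le.mp hrq).le
  have hpq : p < q := hA.lt_of_disjoint hAC hr.1 hp.2 hq.2 hrq
  have hrz : r < z := hC.lt_of_disjoint' hAC hr.1 hq.2 hz.1 hrq
  have hpz : p < z := hC.lt_of_disjoint' hAC hp.2 hq.2 hz.1 hpq.le
  exact ⟨max r p, hB.out hr.2 hq.1 ⟨le_max_left r p, max_le hrq hpq.le⟩,
    hD.out hp.1 hz.2 ⟨le_max_right r p, max_le hrz.le hpz.le⟩⟩

end Set.OrdConnected

theorem Collinear.apply_eq_of_apply_eq {k V P W Q : Type*} [DivisionRing k] [AddCommGroup V]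
    [Module k V] [AddTorsor V P] [AddCommGroup W] [Module k W] [AddTorsor W Q] {s : Set P}
    (h : Collinear k s) (f : P →ᵃ[k] Q) {p r q : P} (hp : p ∈ s) (hr : r ∈ s) (hq : q ∈ s)
    (hpr : p ≠ r) (hf : f p = f r) : f q = f r := by
  obtain ⟨t, rfl⟩ := mem_affineSpan_pair_iff_exists_lineMap_eq.mp
    (h.mem_affineSpan_of_mem_of_ne hp hr hq hpr)
  rw [f.apply_lineMap, hf, AffineMap.lineMap_same_apply]

theorem inter_nonempty_of_collinear_witnesses {E : Type*} [AddCommGroup E] [Module ℝ E]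
    {A B C D : Set E} (hA : Convex ℝ A) (hB : Convex ℝ B) (hC : Convex ℝ C) (hD : Convex ℝ D)
    (hAC : Disjoint A C) {r q z p : E} (hr : r ∈ A ∩ B) (hq : q ∈ B ∩ C) (hz : z ∈ C ∩ D)
    (hp : p ∈ D ∩ A) (hcol : Collinear ℝ {r, q, z, p}) :
    (B ∩ D).Nonempty := by
  obtain ⟨x₀, v, hline⟩ := (collinear_iff_exists_forall_eq_smul_vadd _).mp hcol
  let f : ℝ →ᵃ[ℝ] E := AffineMap.lineMap x₀ (v +ᵥ x₀)
  have hf : ∀ x ∈ ({r, q, z, p} : Set E), ∃ t, f t = x := by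
    intro x hx
    obtain ⟨t, rfl⟩ := hline x hx
    exact ⟨t, by simp [f, AffineMap.lineMap_apply]⟩
  obtain ⟨tr, rfl⟩ := hf r (by simp)
  obtain ⟨tq, rfl⟩ := hf q (by simp)
  obtain ⟨tz, rfl⟩ := hf z (by simp)
  obtain ⟨tp, rfl⟩ := hf p (by simp)
  obtain ⟨t, ht⟩ := Set.OrdConnected.inter_nonempty_of_disjoint
    (hA.affine_preimage f).ordConnected (hB.affine_preimage f).ordConnected
    (hC.affine_preimage f).ordConnected (hD.affine_preimage f).ordConnected
    (hAC.preimage f) hr hq hz hp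
  exact ⟨f t, ht⟩

theorem Seg.convex (s : Seg) : Convex ℝ s.set := by
  unfold Seg.set
  split_ifs
  · exact ((convex_singleton _).linear_preimage (LinearMap.snd ℝ ℝ ℝ)).inter
      ((convex_Icc _ _).linear_preimage (LinearMap.fst ℝ ℝ ℝ))
  · exact ((convex_singleton _).linear_preimage (LinearMap.fst ℝ ℝ ℝ)).inter
      ((convex_Icc _ _).linear_preimage (LinearMap.snd ℝ ℝ ℝ))

theorem Seg.fst_eq_or_snd_eq {s : Seg} {x y : ℝ × ℝ} (hx : x ∈ s.set) (hy : y ∈ s.set) :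
    x.1 = y.1 ∨ x.2 = y.2 := by
  unfold Seg.set at hx hy
  split_ifs at hx hy
  · exact .inr (hx.1.trans hy.1.symm)
  · exact .inl (hx.1.trans hy.1.symm)

theorem collinear_of_forall_fst_eq {s : Set (ℝ × ℝ)} {c : ℝ} (h : ∀ x ∈ s, x.1 = c) :
    Collinear ℝ s :=
  (collinear_iff_exists_forall_eq_smul_vadd s).mpr
    ⟨(c, 0), (0, 1), fun x hx => ⟨x.2, by ext <;> simp [h x hx]⟩⟩

theorem collinear_of_forall_snd_eq {s : Set (ℝ × ℝ)} {c : ℝ} (h : ∀ x ∈ s, x.2 = c) :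
    Collinear ℝ s :=
  (collinear_iff_exists_forall_eq_smul_vadd s).mpr
    ⟨(0, c), (1, 0), fun x hx => ⟨x.1, by ext <;> simp [h x hx]⟩⟩

theorem collinear_insert_of_fst_eq_or_snd_eq {r q z p : ℝ × ℝ} (hcol : Collinear ℝ {r, q, p})
    (hrp : r ≠ p) (hqp : q ≠ p) (hr : r.1 = p.1 ∨ r.2 = p.2) (hqz : q.1 = z.1 ∨ q.2 = z.2)
    (hzp : z.1 = p.1 ∨ z.2 = p.2) : Collinear ℝ {r, q, z, p} := by
  rcases hr with h | h
  · have hq : q.1 = p.1 := hcol.apply_eq_of_apply_eq (LinearMap.fst ℝ ℝ ℝ).toAffineMap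
      (by simp) (by simp) (by simp) hrp h
    have hz : z.1 = p.1 := by
      rcases hzp with hz | hz
      · exact hz
      rcases hqz with hqz | hqz
      · exact hqz.symm.trans hq
      · exact absurd (Prod.ext hq (hqz.trans hz)) hqp
    exact collinear_of_forall_fst_eq (c := p.1) (by simp [h, hq, hz])
  · have hq : q.2 = p.2 := hcol.apply_eq_of_apply_eq (LinearMap.snd ℝ ℝ ℝ).toAffineMap
      (by simp) (by simp) (by simp) hrp h
    have hz : z.2 = p.2 := by
      rcases hzp with hz | hz
      · rcases hqz with hqz | hqz
        · exact absurd (Prod.ext (hqz.trans hz) hq) hqp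
        · exact hqz.symm.trans hq
      · exact hz
    exact collinear_of_forall_snd_eq (c := p.2) (by simp [h, hq, hz])

namespace IsInducedC4

variable {V : Type*} {G : SimpleGraph V} {a b c d : V}

theorem rotate (h : IsInducedC4 G a b c d) : IsInducedC4 G b c d a := by
  obtain ⟨hab, hac, had, hbc, hbd, hcd, hab', hbc', hcd', hda', hac', hbd'⟩ := h
  exact ⟨hbc, hbd, hab.symm, hcd, hac.symm, had.symm, hbc', hcd', hda', hab', hbd',
    fun h => hac' h.symm⟩

end IsInducedC4

namespace IsB0Rep

variable {V : Type*} {G : SimpleGraph V} {I : V → Seg} {a b c d : V}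

theorem inter_nonempty (hI : IsB0Rep G I) {u v : V} (h : G.Adj u v) :
    ((I u).set ∩ (I v).set).Nonempty :=
  (hI u v h.ne).mp h

theorem disjoint (hI : IsB0Rep G I) {u v : V} (huv : u ≠ v) (h : ¬ G.Adj u v) :
    Disjoint (I u).set (I v).set :=
  Set.disjoint_iff_inter_eq_empty.mpr (Set.not_nonempty_iff_eq_empty.mp (mt (hI u v huv).mpr h))

theorem not_collinear_opposite (hI : IsB0Rep G I) (h : IsInducedC4 G a b c d) :
    ¬ Collinear ℝ ((I a).set ∪ (I c).set) := by
  obtain ⟨-, hac, -, -, hbd, -, hab, hbc, hcd, hda, hac', hbd'⟩ := h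
  intro hcol
  obtain ⟨r, hr⟩ := hI.inter_nonempty hab
  obtain ⟨q, hq⟩ := hI.inter_nonempty hbc
  obtain ⟨z, hz⟩ := hI.inter_nonempty hcd
  obtain ⟨p, hp⟩ := hI.inter_nonempty hda
  have hwit : Collinear ℝ {r, q, z, p} := hcol.subset <| by
    simp only [Set.insert_subset_iff, Set.singleton_subset_iff]
    exact ⟨.inl hr.1, .inr hq.2, .inr hz.1, .inl hp.2⟩
  exact (inter_nonempty_of_collinear_witnesses (I a).convex (I b).convex (I c).convex
    (I d).convex (hI.disjoint hac hac') hr hq hz hp hwit).ne_empty (hI.disjoint hbd hbd').inter_eq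

theorem not_collinear_adjacent (hI : IsB0Rep G I) (h : IsInducedC4 G a b c d) :
    ¬ Collinear ℝ ((I a).set ∪ (I b).set) := by
  obtain ⟨-, hac, -, -, hbd, -, hab, hbc, hcd, hda, hac', hbd'⟩ := h
  intro hcol
  have hAC := hI.disjoint hac hac'
  have hBD := hI.disjoint hbd hbd'
  obtain ⟨r, hr⟩ := hI.inter_nonempty hab
  obtain ⟨q, hq⟩ := hI.inter_nonempty hbc
  obtain ⟨z, hz⟩ := hI.inter_nonempty hcd
  obtain ⟨p, hp⟩ := hI.inter_nonempty hda
  have hrp : r ≠ p := fun hrp => Set.disjoint_left.mp hBD hr.2 (hrp ▸ hp.1)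
  have hqp : q ≠ p := fun hqp => Set.disjoint_left.mp hAC (hqp ▸ hp.2) hq.2
  have hrqp : Collinear ℝ {r, q, p} := hcol.subset <| by
    simp only [Set.insert_subset_iff, Set.singleton_subset_iff]
    exact ⟨.inl hr.1, .inr hq.1, .inl hp.2⟩
  have hwit : Collinear ℝ {r, q, z, p} := collinear_insert_of_fst_eq_or_snd_eq hrqp hrp hqp
    (Seg.fst_eq_or_snd_eq hr.1 hp.2) (Seg.fst_eq_or_snd_eq hq.2 hz.1)
    (Seg.fst_eq_or_snd_eq hz.2 hp.1)
  exact (inter_nonempty_of_collinear_witnesses (I a).convex (I b).convex (I c).convex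
    (I d).convex hAC hr hq hz hp hwit).ne_empty hBD.inter_eq

end IsB0Rep

theorem inducedC4_no_two_collinear_general {V : Type*}
    (G : SimpleGraph V) (I : V → Seg) (hI : IsB0Rep G I)
    (a b c d : V) (h : IsInducedC4 G a b c d) :
    ∀ x ∈ ({a, b, c, d} : Set V), ∀ y ∈ ({a, b, c, d} : Set V), x ≠ y →
      ¬ Collinear ℝ ((I x).set ∪ (I y).set) := by
  intro x hx y hy hxy
  have h₂ := h.rotate
  have h₃ := h₂.rotate
  have h₄ := h₃.rotate
  simp only [Set.mem_insert_iff, Set.mem_singleton_iff] at hx hy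
  rcases hx with rfl | rfl | rfl | rfl <;> rcases hy with rfl | rfl | rfl | rfl <;>
  first
  | exact absurd rfl hxy
  | exact hI.not_collinear_adjacent (by assumption)
  | exact hI.not_collinear_opposite (by assumption)
  | rw [Set.union_comm]; exact hI.not_collinear_adjacent (by assumption)

theorem inducedC4_no_two_collinear {V : Type*} [Fintype V]
    (G : SimpleGraph V) (I : V → Seg) (hI : IsB0Rep G I)
    (a b c d : V) (h : IsInducedC4 G a b c d) :
    ∀ x ∈ ({a, b, c, d} : Set V), ∀ y ∈ ({a, b, c, d} : Set V), x ≠ y →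
      ¬ Collinear ℝ ((I x).set ∪ (I y).set) :=
  inducedC4_no_two_collinear_general G I hI a b c d h
end

section
/- In any B₀-VPG representation v ↦ I_v of a finite simple graph G, if vertices x and y are diamond related in G, then the segments I_x and I_y are collinear. -/
/-!
The segments of a diamond diagonal `xy` lie on a common line. If `I x` and `I y` had different
orientations, each of the two common neighbours `u`, `w` meets both of them and so, being
axis-parallel, passes through the crossing point of their lines; then `I u` and `I w` would
intersect although `u` and `w` are non-adjacent. Two intersecting segments of the same
orientation lie on the same line, and lying on a common line is transitive along a chain of
diamond diagonals.
-/

namespace Seg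

def line (s : Seg) : Set (ℝ × ℝ) :=
  if s.horiz then {p | p.2 = s.coord} else {p | p.1 = s.coord}

lemma mem_set_of_horiz {s : Seg} (hs : s.horiz = true) {p : ℝ × ℝ} :
    p ∈ s.set ↔ p.2 = s.coord ∧ p.1 ∈ Set.Icc s.lo s.hi := by
  simp [Seg.set, hs]

lemma mem_set_of_not_horiz {s : Seg} (hs : s.horiz = false) {p : ℝ × ℝ} :
    p ∈ s.set ↔ p.1 = s.coord ∧ p.2 ∈ Set.Icc s.lo s.hi := by
  simp [Seg.set, hs]

lemma set_subset_line (s : Seg) : s.set ⊆ s.line := by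
  unfold Seg.set Seg.line
  split_ifs <;> exact fun p hp => hp.1

lemma collinear_line (s : Seg) : Collinear ℝ s.line := by
  unfold Seg.line
  split_ifs
  · rw [collinear_iff_of_mem (p₀ := ((0 : ℝ), s.coord)) (by exact rfl)]
    exact ⟨(1, 0), fun p (hp : p.2 = s.coord) => ⟨p.1, by simp [Prod.ext_iff, hp]⟩⟩
  · rw [collinear_iff_of_mem (p₀ := (s.coord, (0 : ℝ))) (by exact rfl)]
    exact ⟨(0, 1), fun p (hp : p.1 = s.coord) => ⟨p.2, by simp [Prod.ext_iff, hp]⟩⟩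

lemma line_eq_of_horiz_eq {s t : Seg} (hst : s.horiz = t.horiz)
    (hmeet : (s.set ∩ t.set).Nonempty) :
    s.line = t.line := by
  obtain ⟨p, hps, hpt⟩ := hmeet
  have hcoord : s.coord = t.coord := by
    cases hs : s.horiz
    · exact ((mem_set_of_not_horiz hs).1 hps).1.symm.trans
        ((mem_set_of_not_horiz (hst ▸ hs)).1 hpt).1
    · exact ((mem_set_of_horiz hs).1 hps).1.symm.trans
        ((mem_set_of_horiz (hst ▸ hs)).1 hpt).1
  unfold Seg.line
  rw [hst, hcoord]

lemma crossing_mem_of_meets {s t r : Seg} (hs : s.horiz = true) (ht : t.horiz = false)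
    (hrs : (r.set ∩ s.set).Nonempty) (hrt : (r.set ∩ t.set).Nonempty) :
    (t.coord, s.coord) ∈ r.set := by
  obtain ⟨p, hpr, hps⟩ := hrs
  obtain ⟨q, hqr, hqt⟩ := hrt
  rw [mem_set_of_horiz hs] at hps
  rw [mem_set_of_not_horiz ht] at hqt
  cases hr : r.horiz
  · rw [mem_set_of_not_horiz hr] at hpr hqr ⊢
    exact ⟨hqt.1 ▸ hqr.1, hps.1 ▸ hpr.2⟩
  · rw [mem_set_of_horiz hr] at hpr hqr ⊢
    exact ⟨hps.1 ▸ hpr.1, hqt.1 ▸ hqr.2⟩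

lemma horiz_eq_of_disjoint_common_meets {s t u w : Seg}
    (hus : (u.set ∩ s.set).Nonempty) (hut : (u.set ∩ t.set).Nonempty)
    (hws : (w.set ∩ s.set).Nonempty) (hwt : (w.set ∩ t.set).Nonempty)
    (huw : ¬ (u.set ∩ w.set).Nonempty) :
    s.horiz = t.horiz := by
  cases hs : s.horiz <;> cases ht : t.horiz
  · rfl
  · exact absurd ⟨_, crossing_mem_of_meets ht hs hut hus, crossing_mem_of_meets ht hs hwt hws⟩
      huw
  · exact absurd ⟨_, crossing_mem_of_meets hs ht hus hut, crossing_mem_of_meets hs ht hws hwt⟩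
      huw
  · rfl

end Seg

lemma IsB0Rep.line_eq_of_isDiamondDiagonal {V : Type*} {G : SimpleGraph V} {I : V → Seg}
    (hI : IsB0Rep G I) {x y : V} (hxy : IsDiamondDiagonal G x y) :
    (I x).line = (I y).line := by
  obtain ⟨hadj, u, w, huw, hux, huy, hwx, hwy, hnadj, haux, hauy, hawx, hawy⟩ := hxy
  have hhoriz := Seg.horiz_eq_of_disjoint_common_meets ((hI u x hux).1 haux)
    ((hI u y huy).1 hauy) ((hI w x hwx).1 hawx) ((hI w y hwy).1 hawy)
    (fun h => hnadj ((hI u w huw).2 h))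
  exact Seg.line_eq_of_horiz_eq hhoriz ((hI x y hadj.ne).1 hadj)

lemma IsB0Rep.line_eq_of_diamondRelated {V : Type*} {G : SimpleGraph V} {I : V → Seg}
    (hI : IsB0Rep G I) {x y : V} (h : DiamondRelated G x y) :
    (I x).line = (I y).line := by
  induction h with
  | refl => rfl
  | tail _ hd ih => exact ih.trans (hI.line_eq_of_isDiamondDiagonal hd)

theorem diamondRelated_collinear_general {V : Type*}
    (G : SimpleGraph V) (I : V → Seg) (hI : IsB0Rep G I)
    (x y : V) (h : DiamondRelated G x y) :
    Collinear ℝ ((I x).set ∪ (I y).set) := by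
  refine (I x).collinear_line.subset (Set.union_subset (I x).set_subset_line ?_)
  rw [hI.line_eq_of_diamondRelated h]
  exact (I y).set_subset_line

theorem diamondRelated_collinear {V : Type*} [Fintype V]
    (G : SimpleGraph V) (I : V → Seg) (hI : IsB0Rep G I)
    (x y : V) (h : DiamondRelated G x y) :
    Collinear ℝ ((I x).set ∪ (I y).set) :=
  diamondRelated_collinear_general G I hI x y h
end

section
/- The complement of C₆ is not a B₀-VPG graph. -/
/-! C̄₆ is the triangular prism: the triangles `0, 2, 4` and `1, 3, 5` joined by the matching
`03, 14, 25`, and each edge of the triangle `0, 2, 4` lies on an induced 4-cycle. In a B₀-VPG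
representation two adjacent vertices of an induced `C₄` get perpendicular segments: if `A` and
`B` were parallel, they would lie on a common line, and a segment `D` meeting `A` but not `B`
stays on one side of `A ∪ B` along that line, while a segment `E` meeting `B` but not `A` stays
on the other side, so `D` and `E` could not meet. But among three segments two are parallel. -/

open Set

theorem Set.OrdConnected.mem_uIcc_of_mem_diff {α : Type*} [LinearOrder α] {A B : Set α}
    (hA : A.OrdConnected) (hB : B.OrdConnected) {p r s : α} (hp : p ∈ A ∩ B)
    (hr : r ∈ A \ B) (hs : s ∈ B \ A) : p ∈ uIcc r s := by
  rcases le_total p r with hpr | hrp <;> rcases le_total p s with hps | hsp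
  · rcases le_total r s with hrs | hsr
    · exact absurd (hB.out hp.2 hs.1 ⟨hpr, hrs⟩) hr.2
    · exact absurd (hA.out hp.1 hr.1 ⟨hps, hsr⟩) hs.2
  · exact mem_uIcc.2 (Or.inr ⟨hsp, hpr⟩)
  · exact mem_uIcc.2 (Or.inl ⟨hrp, hps⟩)
  · rcases le_total r s with hrs | hsr
    · exact absurd (hA.out hr.1 hp.1 ⟨hrs, hsp⟩) hs.2
    · exact absurd (hB.out hs.1 hp.2 ⟨hsr, hrp⟩) hr.2

namespace Seg

lemma snd_eq_coord {s : Seg} (hs : s.horiz = true) {p : ℝ × ℝ} (hp : p ∈ s.set) :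
    p.2 = s.coord := by
  simp only [Seg.set, hs, if_true, mem_ofPred_eq] at hp
  exact hp.1

lemma mk_mem_of_mem_uIcc {s : Seg} {r q : ℝ × ℝ} (hr : r ∈ s.set) (hq : q ∈ s.set) {x : ℝ}
    (hx : x ∈ uIcc r.1 q.1) : (x, r.2) ∈ s.set := by
  unfold Seg.set at *
  cases hs : s.horiz <;> simp only [hs, Bool.false_eq_true, if_false, if_true, mem_ofPred_eq]
    at hr hq ⊢
  · rw [hr.1, hq.1, uIcc_self] at hx
    exact ⟨hx, hr.2⟩
  · exact ⟨hr.1, uIcc_subset_Icc hr.2 hq.2 hx⟩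

lemma ordConnected_slice (s : Seg) (c : ℝ) : {x | (x, c) ∈ s.set}.OrdConnected :=
  ⟨fun _ hx _ hy _ hz => mk_mem_of_mem_uIcc (r := (_, c)) hx hy (Icc_subset_uIcc hz)⟩

lemma horiz_eq_false_of_horiz {A B D E : Seg} (hA : A.horiz = true)
    (hAB : (A.set ∩ B.set).Nonempty) (hDA : (D.set ∩ A.set).Nonempty)
    (hEB : (E.set ∩ B.set).Nonempty) (hDE : (D.set ∩ E.set).Nonempty)
    (hDB : ¬(D.set ∩ B.set).Nonempty) (hEA : ¬(E.set ∩ A.set).Nonempty) :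
    B.horiz = false := by
  by_contra hB
  rw [Bool.not_eq_false] at hB
  obtain ⟨p, hpA, hpB⟩ := hAB
  obtain ⟨r, hrD, hrA⟩ := hDA
  obtain ⟨s, hsE, hsB⟩ := hEB
  obtain ⟨q, hqD, hqE⟩ := hDE
  have hr2 : r.2 = p.2 := (snd_eq_coord hA hrA).trans (snd_eq_coord hA hpA).symm
  have hs2 : s.2 = p.2 := (snd_eq_coord hB hsB).trans (snd_eq_coord hB hpB).symm
  have hp_between : p.1 ∈ uIcc r.1 s.1 :=
    (A.ordConnected_slice p.2).mem_uIcc_of_mem_diff (B.ordConnected_slice p.2) ⟨hpA, hpB⟩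
      ⟨by rwa [← hr2], fun h => hDB ⟨r, hrD, by rwa [← hr2] at h⟩⟩
      ⟨by rwa [← hs2], fun h => hEA ⟨s, hsE, by rwa [← hs2] at h⟩⟩
  rcases uIcc_subset_uIcc_union_uIcc hp_between with hp | hp
  · exact hDB ⟨p, by simpa [hr2] using mk_mem_of_mem_uIcc hrD hqD hp, hpB⟩
  · exact hEA ⟨p, by simpa [hs2] using mk_mem_of_mem_uIcc hsE hqE (uIcc_comm q.1 s.1 ▸ hp), hpA⟩

def swap (s : Seg) : Seg := ⟨!s.horiz, s.coord, s.lo, s.hi, s.lo_le_hi⟩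

lemma set_swap (s : Seg) : s.swap.set = Prod.swap ⁻¹' s.set := by
  ext p
  cases h : s.horiz <;> simp [Seg.set, swap, h]

lemma swap_inter_nonempty_iff (s t : Seg) :
    (s.swap.set ∩ t.swap.set).Nonempty ↔ (s.set ∩ t.set).Nonempty := by
  rw [set_swap, set_swap, ← preimage_inter, Prod.swap_surjective.nonempty_preimage]

lemma horiz_ne {A B D E : Seg}
    (hAB : (A.set ∩ B.set).Nonempty) (hDA : (D.set ∩ A.set).Nonempty)
    (hEB : (E.set ∩ B.set).Nonempty) (hDE : (D.set ∩ E.set).Nonempty)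
    (hDB : ¬(D.set ∩ B.set).Nonempty) (hEA : ¬(E.set ∩ A.set).Nonempty) :
    A.horiz ≠ B.horiz := by
  cases hA : A.horiz
  · have hB := horiz_eq_false_of_horiz (A := A.swap) (B := B.swap) (D := D.swap) (E := E.swap)
      (by simp [swap, hA]) ((swap_inter_nonempty_iff _ _).2 hAB)
      ((swap_inter_nonempty_iff _ _).2 hDA) ((swap_inter_nonempty_iff _ _).2 hEB)
      ((swap_inter_nonempty_iff _ _).2 hDE) (mt (swap_inter_nonempty_iff _ _).1 hDB)
      (mt (swap_inter_nonempty_iff _ _).1 hEA)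
    simp only [swap, Bool.not_eq_eq_eq_not, Bool.not_false] at hB
    simp [hB]
  · simp [horiz_eq_false_of_horiz hA hAB hDA hEB hDE hDB hEA]

end Seg

theorem IsB0Rep.horiz_ne_of_isInducedC4 {V : Type*} {G : SimpleGraph V} {I : V → Seg}
    (hI : IsB0Rep G I) {a b c d : V} (h : IsInducedC4 G a b c d) :
    (I a).horiz ≠ (I b).horiz := by
  obtain ⟨hab, hac, had, hbc, hbd, hcd, gab, gbc, gcd, gda, gac, gbd⟩ := h
  exact Seg.horiz_ne ((hI a b hab).1 gab) ((hI d a had.symm).1 gda)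
    ((hI c b hbc.symm).1 gbc.symm) ((hI d c hcd.symm).1 gcd.symm)
    (fun h => gbd ((hI d b hbd.symm).2 h).symm) (fun h => gac ((hI c a hac.symm).2 h).symm)

instance : DecidableRel C6bar.Adj :=
  fun i j => inferInstanceAs (Decidable (i ≠ j ∧ j - i ≠ 1 ∧ i - j ≠ 1))

theorem C6bar_not_B0VPG : ¬ IsB0VPG C6bar := by
  rintro ⟨I, hI⟩
  have h02 := hI.horiz_ne_of_isInducedC4
    (by unfold IsInducedC4; decide : IsInducedC4 C6bar 0 2 5 3)
  have h24 := hI.horiz_ne_of_isInducedC4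
    (by unfold IsInducedC4; decide : IsInducedC4 C6bar 2 4 1 5)
  have h40 := hI.horiz_ne_of_isInducedC4
    (by unfold IsInducedC4; decide : IsInducedC4 C6bar 4 0 3 1)
  revert h02 h24 h40
  cases (I 0).horiz <;> cases (I 2).horiz <;> cases (I 4).horiz <;> decide
end

section
/- Let G be a finite cocomparability graph with a branch partition 𝒫, and let B₀, B₁, B₂ be three pairwise adjacent parts of 𝒫. Then B_{i,i−1} = B_{i,i+1} for each i ∈ {0,1,2} (indices mod 3), and the set B_{0,1} ∪ B_{1,2} ∪ B_{2,0} induces a clique in G. -/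
/-- A branch partition of `G`: a partition of the vertex set into connected
parts such that both endpoints of every diamond diagonal lie in the same part
and no part contains two distinct vertices of a common induced `C₄`. -/
def IsBranchPartition {V : Type*} (G : SimpleGraph V) (P : Set (Set V)) : Prop :=
  (∀ B ∈ P, B.Nonempty) ∧
  (∀ B ∈ P, ∀ B' ∈ P, B ≠ B' → Disjoint B B') ∧
  (∀ v : V, ∃ B ∈ P, v ∈ B) ∧
  (∀ B ∈ P, (SimpleGraph.induce B G).Connected) ∧
  (∀ x y : V, IsDiamondDiagonal G x y → ∀ B ∈ P, x ∈ B → y ∈ B) ∧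
  (∀ a b c d : V, IsInducedC4 G a b c d → ∀ B ∈ P,
     ∀ x ∈ ({a, b, c, d} : Set V), ∀ y ∈ ({a, b, c, d} : Set V),
       x ≠ y → x ∈ B → y ∉ B)

/-- Two parts are adjacent if some edge of `G` has one endpoint in each. -/
def PartsAdjacent {V : Type*} (G : SimpleGraph V) (B B' : Set V) : Prop :=
  ∃ u ∈ B, ∃ v ∈ B', G.Adj u v

/-- `Bset G Bi Bj` is the set of vertices of `Bi` having a neighbor in `Bj`. -/
def Bset {V : Type*} (G : SimpleGraph V) (Bi Bj : Set V) : Set V :=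
  {v ∈ Bi | ∃ u ∈ Bj, G.Adj v u}
/-!
Fix a partial order whose incomparability graph is `G`. A vertex `t ≠ x` not adjacent to `x` lies
strictly above or below `x`, and adjacent such vertices lie on the same side; so a connected set
that meets the closed neighbourhood `N[x]` and contains a vertex above `x` has an edge `a a'` with
`a ∼ x` and `a' > x`.

The whole argument is one configuration: `x, a` in a part `Bᵢ`, `b` in a part `Bⱼ ≠ Bᵢ`,
`a, b ∼ x`, and neighbours `a'` of `a`, `b'` of `b` strictly on the same side of `x`. A common
neighbour of `a` and `b` outside `N[x]` gives a diamond on `ab` or an induced `C₄` through `x, a`;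
otherwise the order forces `ab` and `a'b'` to be edges, so `a a' b' b` is an induced `C₄`, which
has two vertices in one part once `a', b'` lie in `Bᵢ`, `Bⱼ` or one further part. Edges leaving
`N[x]` towards a fixed non-neighbour of `x` produce this configuration whenever two neighbours of an
outside vertex in a part are non-adjacent, whenever `B_{i,j}` is not complete to `B_{j,i}`, and
whenever a vertex of `B_{i,j}` has no neighbour in a part adjacent to both `Bᵢ` and `Bⱼ`.
-/

open SimpleGraph

section

variable {V : Type*} {G : SimpleGraph V}

theorem SimpleGraph.exists_adj_notMem_mem {S T : Set V} (hS : (G.induce S).Preconnected)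
    {u v : V} (hu : u ∈ S) (hv : v ∈ S) (huT : u ∉ T) (hvT : v ∈ T) :
    ∃ d ∈ S, ∃ c ∈ S, d ∉ T ∧ c ∈ T ∧ G.Adj d c := by
  obtain ⟨p⟩ := hS ⟨u, hu⟩ ⟨v, hv⟩
  obtain ⟨d, -, hd, hc⟩ := p.exists_boundary_dart {w | (w : V) ∉ T} huT (by simpa using hvT)
  exact ⟨d.fst, d.fst.2, d.snd, d.snd.2, hd, by simpa using hc, d.adj⟩

section CocomparabilityOrder

variable [PartialOrder V]

def IsCocomparabilityOrder (G : SimpleGraph V) : Prop :=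
  ∀ u v : V, u ≠ v → (G.Adj u v ↔ ¬ (u ≤ v ∨ v ≤ u))

def SameSide (x s t : V) : Prop :=
  x < s ∧ x < t ∨ s < x ∧ t < x

theorem SameSide.symm {x s t : V} (h : SameSide x s t) : SameSide x t s :=
  h.imp And.symm And.symm

theorem SameSide.trans {x s t r : V} (h₁ : SameSide x s t) (h₂ : SameSide x t r) :
    SameSide x s r := by
  rcases h₁ with ⟨hs, ht⟩ | ⟨hs, ht⟩ <;> rcases h₂ with ⟨ht', hr⟩ | ⟨ht', hr⟩
  · exact Or.inl ⟨hs, hr⟩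
  · exact (lt_asymm ht ht').elim
  · exact (lt_asymm ht ht').elim
  · exact Or.inr ⟨hs, hr⟩

theorem SameSide.lt_or_lt_left {x s t : V} (h : SameSide x s t) : x < s ∨ s < x :=
  h.imp And.left And.left

theorem SameSide.lt_or_lt_right {x s t : V} (h : SameSide x s t) : x < t ∨ t < x :=
  h.symm.lt_or_lt_left

namespace IsCocomparabilityOrder

theorem dual (hG : IsCocomparabilityOrder G) : IsCocomparabilityOrder (V := Vᵒᵈ) G :=
  fun u v huv => (hG u v huv).trans (not_congr or_comm)

theorem not_le_of_adj (hG : IsCocomparabilityOrder G) {u v : V} (h : G.Adj u v) : ¬ u ≤ v :=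
  fun hle => (hG u v h.ne).mp h (Or.inl hle)

theorem not_lt_of_adj (hG : IsCocomparabilityOrder G) {u v : V} (h : G.Adj u v) : ¬ u < v :=
  fun hlt => hG.not_le_of_adj h hlt.le

theorem le_or_le_of_not_adj (hG : IsCocomparabilityOrder G) {u v : V} (hne : u ≠ v)
    (h : ¬ G.Adj u v) : u ≤ v ∨ v ≤ u :=
  not_not.mp (mt (hG u v hne).mpr h)

theorem lt_or_lt_of_not_adj (hG : IsCocomparabilityOrder G) {u v : V} (hne : u ≠ v)
    (h : ¬ G.Adj u v) : u < v ∨ v < u :=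
  (hG.le_or_le_of_not_adj hne h).imp (lt_of_le_of_ne · hne) (lt_of_le_of_ne · hne.symm)

theorem not_eq_or_adj (hG : IsCocomparabilityOrder G) {x s : V} (h : x < s ∨ s < x) :
    ¬ (s = x ∨ G.Adj x s) := by
  rintro (rfl | hxs)
  · exact h.elim (lt_irrefl s) (lt_irrefl s)
  · exact h.elim (hG.not_lt_of_adj hxs) (hG.not_lt_of_adj hxs.symm)

theorem adj_of_not_lt_of_lt_of_adj (hG : IsCocomparabilityOrder G) {x d c : V} (hd : ¬ x < d)
    (hc : x < c) (hdc : G.Adj d c) : G.Adj x d := by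
  by_contra hxd
  have hne : x ≠ d := by
    rintro rfl
    exact hG.not_lt_of_adj hdc hc
  rcases hG.le_or_le_of_not_adj hne hxd with h | h
  · exact hd (lt_of_le_of_ne h hne)
  · exact hG.not_le_of_adj hdc (h.trans hc.le)

theorem exists_adj_adj_lt (hG : IsCocomparabilityOrder G) {S : Set V}
    (hS : (G.induce S).Preconnected) {x u v : V} (hu : u ∈ S) (hxu : ¬ x < u) (hv : v ∈ S)
    (hxv : x < v) : ∃ a ∈ S, ∃ a' ∈ S, G.Adj x a ∧ G.Adj a a' ∧ x < a' := by
  obtain ⟨d, hd, c, hc, hxd, hxc, hdc⟩ := exists_adj_notMem_mem (T := Set.Ioi x) hS hu hv hxu hxv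
  exact ⟨d, hd, c, hc, hG.adj_of_not_lt_of_lt_of_adj hxd hxc hdc, hdc, hxc⟩

theorem exists_adj_adj_sameSide (hG : IsCocomparabilityOrder G) {S : Set V}
    (hS : (G.induce S).Preconnected) {x u v : V} (hu : u ∈ S) (hxu : u = x ∨ G.Adj x u)
    (hv : v ∈ S) (hxv : x < v ∨ v < x) :
    ∃ a ∈ S, ∃ a' ∈ S, G.Adj x a ∧ G.Adj a a' ∧ SameSide x v a' := by
  rcases hxv with hxv | hxv
  · obtain ⟨a, ha, a', ha', hxa, haa', hxa'⟩ := hG.exists_adj_adj_lt hS hu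
      (by rcases hxu with rfl | h; exacts [lt_irrefl u, hG.not_lt_of_adj h]) hv hxv
    exact ⟨a, ha, a', ha', hxa, haa', Or.inl ⟨hxv, hxa'⟩⟩
  · obtain ⟨a, ha, a', ha', hxa, haa', hxa'⟩ := hG.dual.exists_adj_adj_lt hS hu
      (by rcases hxu with rfl | h; exacts [lt_irrefl u, hG.dual.not_lt_of_adj h]) hv hxv
    exact ⟨a, ha, a', ha', hxa, haa', Or.inr ⟨hxv, hxa'⟩⟩

theorem adj_and_adj_of_lt (hG : IsCocomparabilityOrder G) {x a b a' b' : V}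
    (hxa : G.Adj x a) (hxb : G.Adj x b) (haa' : G.Adj a a') (hbb' : G.Adj b b')
    (ha'b : ¬ G.Adj a' b) (hb'a : ¬ G.Adj b' a) (ha' : x < a') (hb' : x < b') :
    G.Adj a b ∧ G.Adj a' b' := by
  have hab' : a ≤ b' := by
    rcases hG.le_or_le_of_not_adj (fun e => hG.not_lt_of_adj (e ▸ hxa) hb')
      (fun h => hb'a h.symm) with h | h
    · exact h
    · exact (hG.not_le_of_adj hxa (hb'.le.trans h)).elim
  have hba' : b ≤ a' := by
    rcases hG.le_or_le_of_not_adj (fun e => hG.not_lt_of_adj (e ▸ hxb) ha')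
      (fun h => ha'b h.symm) with h | h
    · exact h
    · exact (hG.not_le_of_adj hxb (ha'.le.trans h)).elim
  constructor
  · by_contra hab
    have hne : a ≠ b := by
      rintro rfl
      exact hb'a hbb'.symm
    rcases hG.le_or_le_of_not_adj hne hab with h | h
    · exact hG.not_le_of_adj haa' (h.trans hba')
    · exact hG.not_le_of_adj hbb' (h.trans hab')
  · by_contra ha'b'
    have hne : a' ≠ b' := by
      rintro rfl
      exact hb'a haa'.symm
    rcases hG.le_or_le_of_not_adj hne ha'b' with h | h
    · exact hG.not_le_of_adj hbb' (hba'.trans h)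
    · exact hG.not_le_of_adj haa' (hab'.trans h)

theorem adj_and_adj_of_sameSide (hG : IsCocomparabilityOrder G) {x a b a' b' : V}
    (hxa : G.Adj x a) (hxb : G.Adj x b) (haa' : G.Adj a a') (hbb' : G.Adj b b')
    (ha'b : ¬ G.Adj a' b) (hb'a : ¬ G.Adj b' a) (hside : SameSide x a' b') :
    G.Adj a b ∧ G.Adj a' b' := by
  rcases hside with ⟨ha', hb'⟩ | ⟨ha', hb'⟩
  · exact hG.adj_and_adj_of_lt hxa hxb haa' hbb' ha'b hb'a ha' hb'
  · exact hG.dual.adj_and_adj_of_lt hxa hxb haa' hbb' ha'b hb'a ha' hb'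

end IsCocomparabilityOrder

end CocomparabilityOrder

theorem PartsAdjacent.symm {B B' : Set V} (h : PartsAdjacent G B B') : PartsAdjacent G B' B :=
  let ⟨u, hu, v, hv, huv⟩ := h
  ⟨v, hv, u, hu, huv.symm⟩

namespace IsBranchPartition

variable {P : Set (Set V)}

theorem ne_of_mem (hP : IsBranchPartition G P) {B B' : Set V} (hB : B ∈ P) (hB' : B' ∈ P)
    (hne : B ≠ B') {x y : V} (hx : x ∈ B) (hy : y ∈ B') : x ≠ y := by
  rintro rfl
  exact Set.disjoint_left.mp (hP.2.1 B hB B' hB' hne) hx hy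

theorem exists_mem (hP : IsBranchPartition G P) (v : V) : ∃ B ∈ P, v ∈ B :=
  hP.2.2.1 v

theorem preconnected (hP : IsBranchPartition G P) {B : Set V} (hB : B ∈ P) :
    (G.induce B).Preconnected :=
  (hP.2.2.2.1 B hB).preconnected

theorem preconnected_union (hP : IsBranchPartition G P) {B B' : Set V} (hB : B ∈ P)
    (hB' : B' ∈ P) (h : PartsAdjacent G B B') : (G.induce (B ∪ B')).Preconnected :=
  let ⟨_, hu, _, hv, huv⟩ := h
  (connected_induce_union (hP.preconnected hB) (hP.preconnected hB') hu hv huv).preconnected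

theorem mem_of_isDiamondDiagonal (hP : IsBranchPartition G P) {x y : V}
    (h : IsDiamondDiagonal G x y) {B : Set V} (hB : B ∈ P) (hx : x ∈ B) : y ∈ B :=
  hP.2.2.2.2.1 x y h B hB hx

theorem eq_of_isInducedC4 (hP : IsBranchPartition G P) {a b c d : V} (h : IsInducedC4 G a b c d)
    {B : Set V} (hB : B ∈ P) {x y : V} (hx : x ∈ ({a, b, c, d} : Set V))
    (hy : y ∈ ({a, b, c, d} : Set V)) (hxB : x ∈ B) (hyB : y ∈ B) : x = y := by
  by_contra hne
  exact hP.2.2.2.2.2 a b c d h B hB x hx y hy hne hxB hyB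

theorem eq_or_adj_of_adj_of_adj (hP : IsBranchPartition G P) {Bi Bj : Set V} (hi : Bi ∈ P)
    (hj : Bj ∈ P) (hij : Bi ≠ Bj) {x a b c : V} (hx : x ∈ Bi) (ha : a ∈ Bi) (hb : b ∈ Bj)
    (hxa : G.Adj x a) (hxb : G.Adj x b) (hac : G.Adj a c) (hbc : G.Adj b c) :
    c = x ∨ G.Adj x c := by
  by_contra! h
  obtain ⟨hcx, hxc⟩ := h
  by_cases hab : G.Adj a b
  · have hdiam : IsDiamondDiagonal G a b :=
      ⟨hab, x, c, hcx.symm, hxa.ne, hxb.ne, hac.ne.symm, hbc.ne.symm, hxc, hxa, hxb, hac.symm,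
        hbc.symm⟩
    exact hP.ne_of_mem hi hj hij (hP.mem_of_isDiamondDiagonal hdiam hi ha) hb rfl
  · have hC4 : IsInducedC4 G x a c b :=
      ⟨hxa.ne, hcx.symm, hxb.ne, hac.ne, hP.ne_of_mem hi hj hij ha hb, hbc.ne.symm, hxa, hac,
        hbc.symm, hxb.symm, hxc, hab⟩
    exact hxa.ne (hP.eq_of_isInducedC4 hC4 hi (by simp) (by simp) hx ha)

variable [PartialOrder V]

theorem not_sameSide (hP : IsBranchPartition G P) (hG : IsCocomparabilityOrder G)
    {Bi Bj Bl : Set V} (hi : Bi ∈ P) (hj : Bj ∈ P) (hl : Bl ∈ P) (hij : Bi ≠ Bj)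
    {x a b a' b' : V} (hx : x ∈ Bi) (ha : a ∈ Bi) (hb : b ∈ Bj) (ha' : a' ∈ Bi ∪ Bl)
    (hb' : b' ∈ Bj ∪ Bl) (hxa : G.Adj x a) (hxb : G.Adj x b) (haa' : G.Adj a a')
    (hbb' : G.Adj b b') : ¬ SameSide x a' b' := by
  intro hside
  have ha'x := hG.not_eq_or_adj hside.lt_or_lt_left
  have hb'x := hG.not_eq_or_adj hside.lt_or_lt_right
  have ha'b : ¬ G.Adj a' b := fun h =>
    ha'x (hP.eq_or_adj_of_adj_of_adj hi hj hij hx ha hb hxa hxb haa' h.symm)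
  have hb'a : ¬ G.Adj b' a := fun h =>
    hb'x (hP.eq_or_adj_of_adj_of_adj hi hj hij hx ha hb hxa hxb h.symm hbb')
  obtain ⟨hab, ha'b'⟩ := hG.adj_and_adj_of_sameSide hxa hxb haa' hbb' ha'b hb'a hside
  have hC4 : IsInducedC4 G a a' b' b :=
    ⟨haa'.ne, fun e => hb'x (Or.inr (e ▸ hxa)), hab.ne, ha'b'.ne,
      fun e => ha'x (Or.inr (e ▸ hxb)), hbb'.ne.symm, haa', ha'b', hbb'.symm, hab.symm,
      fun h => hb'a h.symm, ha'b⟩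
  rcases ha' with ha' | ha'
  · exact haa'.ne (hP.eq_of_isInducedC4 hC4 hi (by simp) (by simp) ha ha')
  rcases hb' with hb' | hb'
  · exact hbb'.ne (hP.eq_of_isInducedC4 hC4 hj (by simp) (by simp) hb hb')
  · exact ha'b'.ne (hP.eq_of_isInducedC4 hC4 hl (by simp) (by simp) ha' hb')

theorem isClique_neighborSet_inter (hP : IsBranchPartition G P) (hG : IsCocomparabilityOrder G)
    {B : Set V} (hB : B ∈ P) {y : V} (hy : y ∉ B) : G.IsClique (G.neighborSet y ∩ B) := by
  rintro x ⟨hyx, hx⟩ x' ⟨hyx', hx'⟩ hxx'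
  obtain ⟨B', hB', hyB'⟩ := hP.exists_mem y
  have hBB' : B ≠ B' := by
    rintro rfl
    exact hy hyB'
  by_contra hadj
  obtain ⟨a, ha, a', ha', hxa, haa', hside⟩ := hG.exists_adj_adj_sameSide (hP.preconnected hB) hx
    (Or.inl rfl) hx' (hG.lt_or_lt_of_not_adj hxx' hadj)
  exact hP.not_sameSide hG hB hB' hB hBB' hx ha hyB' (Or.inl ha') (Or.inr hx') hxa
    (G.adj_symm hyx) haa' hyx' hside.symm

theorem adj_of_mem_bset (hP : IsBranchPartition G P) (hG : IsCocomparabilityOrder G)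
    {Bi Bj : Set V} (hi : Bi ∈ P) (hj : Bj ∈ P) (hij : Bi ≠ Bj) {x y : V}
    (hx : x ∈ Bset G Bi Bj) (hy : y ∈ Bset G Bj Bi) : G.Adj x y := by
  obtain ⟨hxi, y₀, hy₀, hxy₀⟩ := hx
  obtain ⟨hyj, x₀, hx₀, hyx₀⟩ := hy
  by_contra hxy
  have hside := hG.lt_or_lt_of_not_adj (hP.ne_of_mem hi hj hij hxi hyj) hxy
  have hS : (G.induce (Bi ∪ {y})).Preconnected :=
    (connected_induce_union (t := {y}) (hP.preconnected hi) Preconnected.of_subsingleton hx₀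
      (Set.mem_singleton y) hyx₀.symm).preconnected
  obtain ⟨a, ha, a', ha', hxa, haa', hxa'⟩ :=
    hG.exists_adj_adj_sameSide hS (Or.inl hxi) (Or.inl rfl) (Or.inr (Set.mem_singleton y)) hside
  obtain ⟨b, hb, b', hb', hxb, hbb', hxb'⟩ :=
    hG.exists_adj_adj_sameSide (hP.preconnected hj) hy₀ (Or.inr hxy₀) hyj hside
  have ha : a ∈ Bi := ha.resolve_right fun e => hxy (Set.mem_singleton_iff.mp e ▸ hxa)
  exact hP.not_sameSide hG hi hj hj hij hxi ha hb
    (Set.union_subset_union_right Bi (Set.singleton_subset_iff.mpr hyj) ha') (Or.inl hb')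
    hxa hxb haa' hbb' (hxa'.symm.trans hxb')

theorem isClique_bset (hP : IsBranchPartition G P) (hG : IsCocomparabilityOrder G)
    {Bi Bj : Set V} (hi : Bi ∈ P) (hj : Bj ∈ P) (hij : Bi ≠ Bj) : G.IsClique (Bset G Bi Bj) := by
  rintro x hx x' ⟨hx', y, hy, hx'y⟩ hxx'
  have hxy : G.Adj x y := hP.adj_of_mem_bset hG hi hj hij hx ⟨hy, x', hx', hx'y.symm⟩
  exact hP.isClique_neighborSet_inter hG hi (fun h => hP.ne_of_mem hi hj hij h hy rfl)
    ⟨hxy.symm, hx.1⟩ ⟨hx'y.symm, hx'⟩ hxx'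

theorem bset_subset_bset (hP : IsBranchPartition G P) (hG : IsCocomparabilityOrder G)
    {Bi Bj Bl : Set V} (hi : Bi ∈ P) (hj : Bj ∈ P) (hl : Bl ∈ P) (hij : Bi ≠ Bj) (hil : Bi ≠ Bl)
    (hil' : PartsAdjacent G Bi Bl) (hjl' : PartsAdjacent G Bj Bl) :
    Bset G Bi Bj ⊆ Bset G Bi Bl := by
  rintro x ⟨hx, y, hy, hxy⟩
  refine ⟨hx, ?_⟩
  by_contra! hno
  have hS := hP.preconnected_union hi hl hil'
  obtain ⟨-, -, z, hz, -⟩ := hil'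
  have hside := hG.lt_or_lt_of_not_adj (hP.ne_of_mem hi hl hil hx hz) (hno z hz)
  obtain ⟨a, ha, a', ha', hxa, haa', hxa'⟩ :=
    hG.exists_adj_adj_sameSide hS (Or.inl hx) (Or.inl rfl) (Or.inr hz) hside
  obtain ⟨b, hb, b', hb', hxb, hbb', hxb'⟩ := hG.exists_adj_adj_sameSide
    (hP.preconnected_union hj hl hjl') (Or.inl hy) (Or.inr hxy) (Or.inr hz) hside
  exact hP.not_sameSide hG hi hj hl hij hx (ha.resolve_right (hno a · hxa))
    (hb.resolve_right (hno b · hxb)) ha' hb' hxa hxb haa' hbb' (hxa'.symm.trans hxb')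

theorem bset_eq_bset (hP : IsBranchPartition G P) (hG : IsCocomparabilityOrder G)
    {Bi Bj Bk : Set V} (hi : Bi ∈ P) (hj : Bj ∈ P) (hk : Bk ∈ P) (hij : Bi ≠ Bj) (hik : Bi ≠ Bk)
    (hij' : PartsAdjacent G Bi Bj) (hik' : PartsAdjacent G Bi Bk) (hjk' : PartsAdjacent G Bj Bk) :
    Bset G Bi Bj = Bset G Bi Bk :=
  (hP.bset_subset_bset hG hi hj hk hij hik hik' hjk').antisymm
    (hP.bset_subset_bset hG hi hk hj hik hij hij' hjk'.symm)

end IsBranchPartition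

end

theorem branch_triangle_clique_general {V : Type*}
    (G : SimpleGraph V) (hG : IsCocomparability G)
    (P : Set (Set V)) (hP : IsBranchPartition G P)
    (B : ZMod 3 → Set V)
    (hmem : ∀ i : ZMod 3, B i ∈ P)
    (hinj : Function.Injective B)
    (hadj : ∀ i j : ZMod 3, i ≠ j → PartsAdjacent G (B i) (B j)) :
    (∀ i : ZMod 3, Bset G (B i) (B (i - 1)) = Bset G (B i) (B (i + 1))) ∧
    G.IsClique (Bset G (B 0) (B 1) ∪ Bset G (B 1) (B 2) ∪ Bset G (B 2) (B 0)) := by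
  obtain ⟨PO, hPO⟩ := hG
  let _ := PO
  have hcon : ∀ i j k : ZMod 3, j ≠ i → k ≠ i → Bset G (B i) (B j) = Bset G (B i) (B k) := by
    intro i j k hj hk
    rcases eq_or_ne j k with rfl | hjk
    · rfl
    · exact hP.bset_eq_bset hPO (hmem i) (hmem j) (hmem k) (hinj.ne hj.symm) (hinj.ne hk.symm)
        (hadj i j hj.symm) (hadj i k hk.symm) (hadj j k hjk)
  refine ⟨fun i => hcon i _ _ (by revert i; decide) (by revert i; decide), ?_⟩
  have hpair : ∀ i j k l : ZMod 3, k ≠ i → l ≠ j → ∀ u ∈ Bset G (B i) (B k),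
      ∀ v ∈ Bset G (B j) (B l), u ≠ v → G.Adj u v := by
    intro i j k l hk hl u hu v hv huv
    rcases eq_or_ne i j with rfl | hij
    · rw [hcon i l k hl hk] at hv
      exact hP.isClique_bset hPO (hmem i) (hmem k) (hinj.ne hk.symm) hu hv huv
    · rw [hcon i k j hk hij.symm] at hu
      rw [hcon j l i hl hij] at hv
      exact hP.adj_of_mem_bset hPO (hmem i) (hmem j) (hinj.ne hij) hu hv
  rintro u hu v hv huv
  rcases hu with (hu | hu) | hu <;> rcases hv with (hv | hv) | hv <;>
    exact hpair _ _ _ _ (by decide) (by decide) u hu v hv huv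

theorem branch_triangle_clique {V : Type*} [Fintype V]
    (G : SimpleGraph V) (hG : IsCocomparability G)
    (P : Set (Set V)) (hP : IsBranchPartition G P)
    (B : ZMod 3 → Set V)
    (hmem : ∀ i : ZMod 3, B i ∈ P)
    (hinj : Function.Injective B)
    (hadj : ∀ i j : ZMod 3, i ≠ j → PartsAdjacent G (B i) (B j)) :
    (∀ i : ZMod 3, Bset G (B i) (B (i - 1)) = Bset G (B i) (B (i + 1))) ∧
    G.IsClique (Bset G (B 0) (B 1) ∪ Bset G (B 1) (B 2) ∪ Bset G (B 2) (B 0)) :=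
  branch_triangle_clique_general G hG P hP B hmem hinj hadj
end
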